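/- There exists a rank-ordered lexicographic set extension that violates fixed-cardinality responsiveness: with candidates a ≻ b ≻ c ≻ d ≻ e and the order ⪰₂ on equal-size sets that compares sets by their second-best element first (breaking further ties arbitrarily, say by the leximax order on the remaining elements), we have {c,d} ⪰₂ {a,e} but not {b,c,d} ⪰₂ {a,b,e}. -/

import Mathlib

/-- Swap the first two entries of a list. -/
def swapTwo {α : Type*} : List α → List α
  | a :: b :: t => b :: a :: t
  | l => l

/-- The key list for the "second-best first" comparison: the decreasing list of
the set's elements with the first two entries swapped, so that the second-best
element comes first and ties are broken leximax-style on the rest. -/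
def keyList {C : Type*} [LinearOrder C] (X : Finset C) : List C :=
  swapTwo (X.sort (· ≤ ·)).reverse

/-- The rank-ordered lexicographic extension comparing the second-best element
first, with remaining ties broken by the leximax order on the other elements. -/
def secondBest {C : Type*} [LinearOrder C] (X Y : Finset C) : Prop :=
  keyList X = keyList Y ∨ List.Lex (· < ·) (keyList Y) (keyList X)

theorem keyList_toFinset {C : Type*} [LinearOrder C] {l : List C}
    (hl : l.Pairwise (· < ·)) : keyList l.toFinset = swapTwo l.reverse := by
  rw [keyList, (List.toFinset_sort _ hl.nodup).2 (hl.imp le_of_lt)]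

/-- The candidates `a ≻ b ≻ c ≻ d ≻ e` are `4 > 3 > 2 > 1 > 0` in `Fin 5`. -/
theorem stmt_4 :
    secondBest ({2, 1} : Finset (Fin 5)) ({4, 0} : Finset (Fin 5)) ∧
    ¬ secondBest ({3, 2, 1} : Finset (Fin 5)) ({4, 3, 0} : Finset (Fin 5)) := by
  -- `Finset.sort` is a merge sort that `decide` cannot evaluate, so each set is first
  -- presented by its increasing list of elements.
  rw [show ({3, 2, 1} : Finset (Fin 5)) = [1, 2, 3].toFinset by decide,
    show ({4, 3, 0} : Finset (Fin 5)) = [0, 3, 4].toFinset by decide,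
    show ({2, 1} : Finset (Fin 5)) = [1, 2].toFinset by decide,
    show ({4, 0} : Finset (Fin 5)) = [0, 4].toFinset by decide]
  simp (disch := decide) only [secondBest, keyList_toFinset]
  decide
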